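/- arXiv:2106.12756 — 2 statements merged into one kernel-verified Lean document; each statement's English description precedes it below -/
import Mathlib

section
/- Let a, b be positive integers with a ≤ b. Then for all integers k ≥ 2, the inequality k·(k + (b - a - 1)) + 1 ≤ 0 is impossible. Consequently, if c, d are positive integers with c ≤ d, a + b = c + d + 1, c < a, and ab - cd + 1 ≤ a, a contradiction arises; hence c ≥ a - 1. -/
/-- Proof core of Theorem 5.3(1): for positive integers `a ≤ b`,
`k·(k + (b - a - 1)) + 1 ≤ 0` is impossible for `k ≥ 2`; consequently, for
positive `c ≤ d` with `a + b = c + d + 1` and `a·b - c·d + 1 ≤ a`, one must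
have `c ≥ a - 1`. -/
theorem stmt5 (a b : ℤ) (ha : 1 ≤ a) (hab : a ≤ b) :
    (∀ k : ℤ, 2 ≤ k → ¬ (k * (k + (b - a - 1)) + 1 ≤ 0)) ∧
    (∀ c d : ℤ, 1 ≤ c → c ≤ d → a + b = c + d + 1 →
      a * b - c * d + 1 ≤ a → a - 1 ≤ c) := by
  constructor
  · intro k hk h
    nlinarith
  · intro c d hc hcd hsum hineq
    by_contra h
    push_neg at h
    nlinarith [mul_pos (sub_pos.mpr h) (sub_pos.mpr h)]
end

section
/- Let a, b, c, d be positive integers with 1 ≤ a ≤ b, c ≤ d, c + d = a + b + 1, and let m := cd - ab + 1. If m ≥ b + 1 whenever m ≠ a + 1, then a ≤ c and d ≤ b + 1. -/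
/-- Numerical content of Theorem 5.3(2): if `1 ≤ a ≤ b`, `1 ≤ c ≤ d`,
`c + d = a + b + 1` and the restriction size `m := c·d - a·b + 1` satisfies
`m = a + 1` or `m ≥ b + 1`, then `a ≤ c` and `d ≤ b + 1`. -/
theorem stmt7 (a b c d : ℤ) (ha : 1 ≤ a) (hab : a ≤ b)
    (hc : 1 ≤ c) (hcd : c ≤ d) (hsum : c + d = a + b + 1)
    (hres : c * d - a * b + 1 = a + 1 ∨ c * d - a * b + 1 ≥ b + 1) :
    a ≤ c ∧ d ≤ b + 1 := by
  have key : a ≤ c := by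
    by_contra h
    push_neg at h
    rcases hres with h1 | h1
    · nlinarith [mul_pos (sub_pos.mpr h) (show (0:ℤ) < b + 1 - c by linarith)]
    · nlinarith [mul_pos (sub_pos.mpr h) (sub_pos.mpr h), mul_pos (sub_pos.mpr h) (show (0:ℤ) < d - b - 1 by linarith)]
  exact ⟨key, by linarith⟩
end
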